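/- Let X, Y, Z be metric spaces with Z on the segment between X and Y (d_GH(X,Z) + d_GH(Z,Y) = d_GH(X,Y)), d_GH(X,Z) > 0, d_GH(Z,Y) > 0, and suppose Z has an isolated point z*. Then for 0 < μ < min{2·d_GH(X,Z), 2·d_GH(Z,Y), 2·S(z*)} and any nonempty index set I, the space W obtained from Z by replacing z* with a μ-simplex on I also satisfies d_GH(X,W) + d_GH(W,Y) = d_GH(X,Y). -/

import Mathlib

open scoped ENNReal

/-- A correspondence between `X` and `Y`: a relation whose projections are surjective. -/
def IsCorr {X Y : Type*} (R : Set (X × Y)) : Prop :=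
  (∀ x : X, ∃ y : Y, (x, y) ∈ R) ∧ (∀ y : Y, ∃ x : X, (x, y) ∈ R)

/-- The distortion of a relation: `sup |d(x,x') - d(y,y')|` over pairs in `R`. -/
noncomputable def corrDis {X Y : Type*} [MetricSpace X] [MetricSpace Y]
    (R : Set (X × Y)) : ℝ≥0∞ :=
  ⨆ p ∈ R, ⨆ q ∈ R, edist (dist p.1 q.1) (dist p.2 q.2)

/-- The Gromov–Hausdorff distance: half the infimal distortion of correspondences. -/
noncomputable def ghDist (X Y : Type*) [MetricSpace X] [MetricSpace Y] : ℝ≥0∞ :=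
  (⨅ (R : Set (X × Y)) (_ : IsCorr R), corrDis R) / 2

/-- The distance on `W = I ⊔ (Z ∖ {z*})`: the original metric on `Z ∖ {z*}`, `μ` between
distinct simplex vertices `i ∈ I`, and `dist z* w` between simplex vertices and `w ∈ Z ∖ {z*}`. -/
noncomputable def dW {Z : Type*} [MetricSpace Z] (zs : Z) (μ : ℝ) {I : Type*} [DecidableEq I] :
    I ⊕ {z : Z // z ≠ zs} → I ⊕ {z : Z // z ≠ zs} → ℝ
  | Sum.inl i, Sum.inl j => if i = j then 0 else μ
  | Sum.inl _, Sum.inr w => dist zs w.1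
  | Sum.inr w, Sum.inl _ => dist zs w.1
  | Sum.inr w, Sum.inr w' => dist w.1 w'.1

/-- `S(z*) = inf {d(z*,z) : z ≠ z*}`. -/
noncomputable def isolR {Z : Type*} [MetricSpace Z] (zs : Z) : ℝ :=
  sInf {r : ℝ | ∃ z : Z, z ≠ zs ∧ r = dist zs z}

/-! Collapsing the simplex back to `z*` gives a surjection `W → Z` that is isometric off its only
nontrivial fiber, the simplex, whose diameter is at most `μ`. Pulling a correspondence `R` between
`X` and `Z` back along it distorts distances only within that fiber, by at most
`max (dis R) μ = dis R` since `μ ≤ 2 d_GH(X,Z) ≤ dis R`. Hence `d_GH(X,W) ≤ d_GH(X,Z)`, likewise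
`d_GH(W,Y) ≤ d_GH(Z,Y)`, and the triangle inequality forces equality on the segment. -/

open scoped SetRel

section Correspondence

variable {X Y Z : Type*}

lemma IsCorr.inv {R : Set (X × Y)} (hR : IsCorr R) : IsCorr (SetRel.inv R) :=
  ⟨hR.2, hR.1⟩

lemma IsCorr.comp {R : Set (X × Y)} {S : Set (Y × Z)} (hR : IsCorr R) (hS : IsCorr S) :
    IsCorr (R ○ S) := by
  constructor
  · intro x
    obtain ⟨y, hxy⟩ := hR.1 x
    obtain ⟨z, hyz⟩ := hS.1 y
    exact ⟨z, y, hxy, hyz⟩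
  · intro z
    obtain ⟨y, hyz⟩ := hS.2 z
    obtain ⟨x, hxy⟩ := hR.2 y
    exact ⟨x, y, hxy, hyz⟩

lemma IsCorr.comap {W : Type*} {R : Set (X × Z)} (hR : IsCorr R) {f : W → Z}
    (hf : f.Surjective) : IsCorr (Prod.map id f ⁻¹' R) := by
  constructor
  · intro x
    obtain ⟨z, hxz⟩ := hR.1 x
    obtain ⟨w, rfl⟩ := hf z
    exact ⟨w, hxz⟩
  · exact fun w => hR.2 (f w)

variable [MetricSpace X] [MetricSpace Y] [MetricSpace Z]

lemma edist_dist_le_corrDis {R : Set (X × Y)} {x x' : X} {y y' : Y}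
    (h : (x, y) ∈ R) (h' : (x', y') ∈ R) :
    edist (dist x x') (dist y y') ≤ corrDis R :=
  le_iSup₂_of_le (x, y) h (le_iSup₂_of_le (x', y') h' le_rfl)

lemma corrDis_le {R : Set (X × Y)} {C : ℝ≥0∞}
    (h : ∀ p ∈ R, ∀ q ∈ R, edist (dist p.1 q.1) (dist p.2 q.2) ≤ C) : corrDis R ≤ C :=
  iSup₂_le fun p hp => iSup₂_le fun q hq => h p hp q hq

lemma corrDis_inv_le (R : Set (X × Y)) : corrDis (SetRel.inv R) ≤ corrDis R :=
  corrDis_le fun _ hp _ hq => (edist_comm _ _).trans_le (edist_dist_le_corrDis hp hq)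

lemma corrDis_comp_le (R : Set (X × Y)) (S : Set (Y × Z)) :
    corrDis (R ○ S) ≤ corrDis R + corrDis S := by
  refine corrDis_le fun p ⟨y, hR, hS⟩ q ⟨y', hR', hS'⟩ => ?_
  exact (edist_triangle _ (dist y y') _).trans
    (add_le_add (edist_dist_le_corrDis hR hR') (edist_dist_le_corrDis hS hS'))

lemma corrDis_comap_le {W : Type*} [MetricSpace W] (R : Set (X × Z)) (f : W → Z) {C : ℝ≥0∞}
    (hdist : ∀ a b, f a ≠ f b → dist a b = dist (f a) (f b))
    (hfib : ∀ a b, f a = f b → ENNReal.ofReal (dist a b) ≤ C) :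
    corrDis (Prod.map id f ⁻¹' R) ≤ max (corrDis R) C := by
  refine corrDis_le fun ⟨x, a⟩ hp ⟨x', b⟩ hq => ?_
  replace hp : (x, f a) ∈ R := hp
  replace hq : (x', f b) ∈ R := hq
  by_cases hab : f a = f b
  · have hx : ENNReal.ofReal (dist x x') ≤ corrDis R := by
      simpa [hab, edist_dist, Real.dist_eq] using edist_dist_le_corrDis hp hq
    have hmax : |dist x x' - dist a b| ≤ max (dist x x') (dist a b) :=
      abs_sub_le_of_nonneg_of_le dist_nonneg (le_max_left _ _) dist_nonneg (le_max_right _ _)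
    calc edist (dist x x') (dist a b)
        ≤ ENNReal.ofReal (max (dist x x') (dist a b)) := by
          rw [edist_dist, Real.dist_eq]; exact ENNReal.ofReal_le_ofReal hmax
      _ ≤ max (corrDis R) C := by
          rw [ENNReal.ofReal_max]; exact max_le_max hx (hfib a b hab)
  · change edist (dist x x') (dist a b) ≤ _
    rw [hdist a b hab]
    exact (edist_dist_le_corrDis hp hq).trans (le_max_left _ _)

end Correspondence

section GromovHausdorff

variable {X Y Z : Type*} [MetricSpace X] [MetricSpace Y] [MetricSpace Z]

lemma two_mul_ghDist : 2 * ghDist X Y = ⨅ (R : Set (X × Y)) (_ : IsCorr R), corrDis R :=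
  ENNReal.mul_div_cancel two_ne_zero ENNReal.ofNat_ne_top

lemma ghDist_le_ghDist_of_forall_isCorr {X' Y' : Type*} [MetricSpace X'] [MetricSpace Y']
    (h : ∀ R : Set (X × Y), IsCorr R → ∃ R' : Set (X' × Y'), IsCorr R' ∧ corrDis R' ≤ corrDis R) :
    ghDist X' Y' ≤ ghDist X Y := by
  refine ENNReal.div_le_div_right (le_iInf₂ fun R hR => ?_) 2
  obtain ⟨R', hR', hle⟩ := h R hR
  exact (iInf₂_le R' hR').trans hle

lemma ghDist_comm (X Y : Type*) [MetricSpace X] [MetricSpace Y] : ghDist X Y = ghDist Y X :=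
  le_antisymm (ghDist_le_ghDist_of_forall_isCorr fun R hR => ⟨_, hR.inv, corrDis_inv_le R⟩)
    (ghDist_le_ghDist_of_forall_isCorr fun R hR => ⟨_, hR.inv, corrDis_inv_le R⟩)

lemma ghDist_triangle (X Y Z : Type*) [MetricSpace X] [MetricSpace Y] [MetricSpace Z] :
    ghDist X Z ≤ ghDist X Y + ghDist Y Z := by
  rw [ghDist, ghDist, ghDist, ENNReal.div_add_div_same]
  refine ENNReal.div_le_div_right ?_ 2
  simp only [ENNReal.iInf_add, ENNReal.add_iInf, le_iInf_iff]
  intro S hS R hR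
  exact (iInf₂_le (R ○ S) (hR.comp hS)).trans (corrDis_comp_le R S)

lemma ghDist_le_of_surjective {W : Type*} [MetricSpace W] {f : W → Z} (hf : f.Surjective)
    (hdist : ∀ a b, f a ≠ f b → dist a b = dist (f a) (f b))
    (hfib : ∀ a b, f a = f b → ENNReal.ofReal (dist a b) ≤ 2 * ghDist X Z) :
    ghDist X W ≤ ghDist X Z := by
  refine ghDist_le_ghDist_of_forall_isCorr (X' := X) (Y' := W) fun R hR => ⟨_, hR.comap hf, ?_⟩
  have hC : 2 * ghDist X Z ≤ corrDis R := by
    rw [two_mul_ghDist]; exact iInf₂_le R hR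
  exact (corrDis_comap_le R f hdist hfib).trans (max_le le_rfl hC)

end GromovHausdorff

section Simplex

variable {Z : Type*} {zs : Z} {I : Type*}

def simplexCollapse (zs : Z) (I : Type*) : I ⊕ {z : Z // z ≠ zs} → Z :=
  Sum.elim (fun _ => zs) Subtype.val

lemma simplexCollapse_surjective [Nonempty I] : (simplexCollapse zs I).Surjective := by
  intro z
  by_cases hz : z = zs
  · exact ⟨.inl (Classical.arbitrary I), hz.symm⟩
  · exact ⟨.inr ⟨z, hz⟩, rfl⟩

variable [MetricSpace Z] {μ : ℝ} [DecidableEq I] [MetricSpace (I ⊕ {z : Z // z ≠ zs})]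

lemma dist_eq_dist_simplexCollapse (hm : ∀ a b : I ⊕ {z : Z // z ≠ zs}, dist a b = dW zs μ a b)
    (a b : I ⊕ {z : Z // z ≠ zs}) (hab : simplexCollapse zs I a ≠ simplexCollapse zs I b) :
    dist a b = dist (simplexCollapse zs I a) (simplexCollapse zs I b) := by
  rcases a with i | w <;> rcases b with j | w'
  · exact absurd rfl hab
  · exact hm _ _
  · exact (hm _ _).trans (dist_comm _ _)
  · exact hm _ _

lemma ofReal_dist_le_of_simplexCollapse_eq
    (hm : ∀ a b : I ⊕ {z : Z // z ≠ zs}, dist a b = dW zs μ a b)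
    (a b : I ⊕ {z : Z // z ≠ zs}) (hab : simplexCollapse zs I a = simplexCollapse zs I b) :
    ENNReal.ofReal (dist a b) ≤ ENNReal.ofReal μ := by
  rcases a with i | ⟨w, hw⟩ <;> rcases b with j | ⟨w', hw'⟩
  · rw [hm]
    by_cases hij : i = j <;> simp [dW, hij]
  · exact absurd hab.symm hw'
  · exact absurd hab hw
  · obtain rfl : w = w' := hab
    simp

end Simplex

theorem stmt7_general {X Y Z : Type*} [MetricSpace X] [MetricSpace Y] [MetricSpace Z]
    (hseg : ghDist X Z + ghDist Z Y = ghDist X Y)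
    (zs : Z) (μ : ℝ)
    (hμX : ENNReal.ofReal μ < 2 * ghDist X Z) (hμY : ENNReal.ofReal μ < 2 * ghDist Z Y)
    {I : Type*} [DecidableEq I] [Nonempty I]
    [MetricSpace (I ⊕ {z : Z // z ≠ zs})]
    (hm : ∀ a b : I ⊕ {z : Z // z ≠ zs}, dist a b = dW zs μ a b) :
    ghDist X (I ⊕ {z : Z // z ≠ zs}) + ghDist (I ⊕ {z : Z // z ≠ zs}) Y = ghDist X Y := by
  have hdist := dist_eq_dist_simplexCollapse hm
  have hfib := ofReal_dist_le_of_simplexCollapse_eq hm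
  have hXW : ghDist X (I ⊕ {z : Z // z ≠ zs}) ≤ ghDist X Z :=
    ghDist_le_of_surjective simplexCollapse_surjective hdist
      fun a b hab => (hfib a b hab).trans hμX.le
  have hWY : ghDist (I ⊕ {z : Z // z ≠ zs}) Y ≤ ghDist Z Y := by
    rw [ghDist_comm _ Y, ghDist_comm Z Y]
    exact ghDist_le_of_surjective simplexCollapse_surjective hdist
      fun a b hab => (hfib a b hab).trans (ghDist_comm Z Y ▸ hμY.le)
  exact le_antisymm (hseg ▸ add_le_add hXW hWY) (ghDist_triangle X _ Y)

/-- If `Z` lies strictly inside the metric segment `[X,Y]` and has an isolated point `z*`,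
then the space `W` obtained by replacing `z*` with a `μ`-simplex on any nonempty `I`
also lies on the segment `[X,Y]`. -/
theorem stmt7 {X Y Z : Type*} [MetricSpace X] [MetricSpace Y] [MetricSpace Z]
    (hseg : ghDist X Z + ghDist Z Y = ghDist X Y)
    (hXZ : 0 < ghDist X Z) (hZY : 0 < ghDist Z Y)
    (zs : Z) (hiso : 0 < isolR zs) (μ : ℝ) (hμ0 : 0 < μ)
    (hμX : ENNReal.ofReal μ < 2 * ghDist X Z) (hμY : ENNReal.ofReal μ < 2 * ghDist Z Y)
    (hμS : μ < 2 * isolR zs)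
    {I : Type*} [DecidableEq I] [Nonempty I]
    [MetricSpace (I ⊕ {z : Z // z ≠ zs})]
    (hm : ∀ a b : I ⊕ {z : Z // z ≠ zs}, dist a b = dW zs μ a b) :
    ghDist X (I ⊕ {z : Z // z ≠ zs}) + ghDist (I ⊕ {z : Z // z ≠ zs}) Y = ghDist X Y :=
  stmt7_general hseg zs μ hμX hμY hm
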